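/- Inverse metric formula: let g = g₀ + h with g₀ invertible 4×4, H = g₀^{-1}h, H_k = tr(H^k), and suppose D := 1 + H₁ + (1/2)(H₁² - H₂) + (1/6)(H₁³ - 3H₁H₂ + 2H₃) + (1/24)(H₁⁴ - 6H₁²H₂ + 8H₁H₃ + 3H₂² - 6H₄) ≠ 0. Then g is invertible and g^{-1} = D^{-1}·[-H³ + (1 + H₁)H² - (1 + H₁ + (1/2)(H₁² - H₂))H + (1 + H₁ + (1/2)(H₁² - H₂) + (1/6)(H₁³ - 3H₁H₂ + 2H₃))I]·g₀^{-1}. -/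
import Mathlib


open Matrix

set_option maxHeartbeats 4000000 in
theorem key19 (A : Matrix (Fin 4) (Fin 4) ℂ) :
    (1 + A) * (-(A ^ 3) + (1 + A.trace) • A ^ 2
        - (1 + A.trace + (1 / 2 : ℂ) * (A.trace ^ 2 - (A ^ 2).trace)) • A
        + (1 + A.trace + (1 / 2 : ℂ) * (A.trace ^ 2 - (A ^ 2).trace)
            + (1 / 6 : ℂ) * (A.trace ^ 3 - 3 * A.trace * (A ^ 2).trace
                + 2 * (A ^ 3).trace)) • (1 : Matrix (Fin 4) (Fin 4) ℂ))
    = (1 + A.trace + (1 / 2) * (A.trace ^ 2 - (A ^ 2).trace)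
        + (1 / 6) * (A.trace ^ 3 - 3 * A.trace * (A ^ 2).trace + 2 * (A ^ 3).trace)
        + (1 / 24) * (A.trace ^ 4 - 6 * A.trace ^ 2 * (A ^ 2).trace
            + 8 * A.trace * (A ^ 3).trace + 3 * (A ^ 2).trace ^ 2 - 6 * (A ^ 4).trace)) • (1 : Matrix (Fin 4) (Fin 4) ℂ) := by
  have h2 : A ^ 2 = A * A := sq A
  have h3 : A ^ 3 = A * A * A := by rw [pow_succ, h2]
  have h4 : A ^ 4 = A * A * A * A := by rw [pow_succ, h3]
  ext i j
  fin_cases i <;> fin_cases j <;>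
    simp [h2, h3, h4, Matrix.mul_apply, Matrix.trace, Matrix.diag,
      Fin.sum_univ_four, Matrix.one_apply, smul_eq_mul] <;>
    ring

/-- Inverse metric formula: with `g = g₀ + h`, `H = g₀⁻¹h`, `H_k = tr(H^k)` and
`D := 1 + H₁ + ½(H₁² - H₂) + (1/6)(H₁³ - 3H₁H₂ + 2H₃)
+ (1/24)(H₁⁴ - 6H₁²H₂ + 8H₁H₃ + 3H₂² - 6H₄) ≠ 0`, the matrix `g` is invertible and
`g⁻¹ = D⁻¹ • [-H³ + (1+H₁)H² - (1+H₁+½(H₁²-H₂))H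
+ (1+H₁+½(H₁²-H₂)+(1/6)(H₁³-3H₁H₂+2H₃))I] * g₀⁻¹`. -/
theorem stmt19 (g₀ h : Matrix (Fin 4) (Fin 4) ℂ) (hg₀ : IsUnit g₀.det)
    (H : Matrix (Fin 4) (Fin 4) ℂ) (hH : H = g₀⁻¹ * h)
    (D : ℂ)
    (hD : D = 1 + H.trace + (1 / 2) * (H.trace ^ 2 - (H ^ 2).trace)
        + (1 / 6) * (H.trace ^ 3 - 3 * H.trace * (H ^ 2).trace + 2 * (H ^ 3).trace)
        + (1 / 24) * (H.trace ^ 4 - 6 * H.trace ^ 2 * (H ^ 2).trace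
            + 8 * H.trace * (H ^ 3).trace + 3 * (H ^ 2).trace ^ 2 - 6 * (H ^ 4).trace))
    (hD0 : D ≠ 0) :
    IsUnit (g₀ + h).det ∧
      (g₀ + h)⁻¹ =
        D⁻¹ •
          ((-(H ^ 3) + (1 + H.trace) • H ^ 2
              - (1 + H.trace + (1 / 2 : ℂ) * (H.trace ^ 2 - (H ^ 2).trace)) • H
              + (1 + H.trace + (1 / 2 : ℂ) * (H.trace ^ 2 - (H ^ 2).trace)
                  + (1 / 6 : ℂ) * (H.trace ^ 3 - 3 * H.trace * (H ^ 2).trace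
                      + 2 * (H ^ 3).trace)) • (1 : Matrix (Fin 4) (Fin 4) ℂ))
            * g₀⁻¹) := by
  set B : Matrix (Fin 4) (Fin 4) ℂ :=
    -(H ^ 3) + (1 + H.trace) • H ^ 2
      - (1 + H.trace + (1 / 2 : ℂ) * (H.trace ^ 2 - (H ^ 2).trace)) • H
      + (1 + H.trace + (1 / 2 : ℂ) * (H.trace ^ 2 - (H ^ 2).trace)
          + (1 / 6 : ℂ) * (H.trace ^ 3 - 3 * H.trace * (H ^ 2).trace
              + 2 * (H ^ 3).trace)) • (1 : Matrix (Fin 4) (Fin 4) ℂ) with hB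
  have hkey : (1 + H) * B = D • 1 := by rw [hB, key19, hD]
  have hgh : g₀ + h = g₀ * (1 + H) := by
    rw [hH, mul_add, mul_one, Matrix.mul_nonsing_inv_cancel_left _ _ hg₀]
  have hright : (g₀ + h) * (D⁻¹ • (B * g₀⁻¹)) = 1 := by
    rw [Matrix.mul_smul, hgh, mul_assoc, ← mul_assoc (1 + H), hkey, smul_mul_assoc,
      one_mul, Matrix.mul_smul, Matrix.mul_nonsing_inv _ hg₀, smul_smul,
      inv_mul_cancel₀ hD0, one_smul]
  exact ⟨Matrix.isUnit_det_of_right_inverse hright, Matrix.inv_eq_right_inv hright⟩
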